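/- arXiv:1710.04967 — 2 statements merged into one kernel-verified Lean document; each statement's English description precedes it below -/
import Mathlib

section
/- For complex q with 0 < |q| < 1, complex numbers w and z, and complex t with |t| < 1 and |zt| < 1, the q-Sylvester polynomials φ_n(z;q) := (z^n/(q;q)_n) ∑_{k=0}^n ((q^{-n};q)_k (w;q)_k / (q;q)_k) (-1)^k q^{k(k-1)/2} (q^n/z)^k satisfy ∑_{n=0}^∞ φ_n(z;q) t^n = (w t; q)_∞ / ((t;q)_∞ · (zt;q)_∞), where w plays the role of q^z. -/
/-!
With `c_k(a) = (a;q)_k/(q;q)_k`, the Sylvester polynomials are the Cauchy product of two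
q-binomial series, `φ_n(z;q) tⁿ = ∑_{k ≤ n} c_k(w) t^k · c_{n-k}(0) (zt)^{n-k}`, so the theorem
is the q-binomial theorem `∑ c_k(a) x^k = (ax;q)_∞/(x;q)_∞` at `(a, x) = (w, t)` and `(0, zt)`.
The q-binomial series `F` satisfies `(1 - x) F(x) = (1 - ax) F(qx)`; iterating gives
`(x;q)_n F(x) = (ax;q)_n F(qⁿx)`, and `F(qⁿx) → F(0) = 1` by dominated convergence.
-/

open Finset Filter Topology

/-- The finite q-Pochhammer symbol `(a;q)_n = ∏_{j=0}^{n-1} (1 - a q^j)`. -/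
noncomputable def qPoch (a q : ℂ) (n : ℕ) : ℂ :=
  ∏ j ∈ Finset.range n, (1 - a * q ^ j)

/-- The infinite q-Pochhammer symbol `(a;q)_∞ = ∏_{j=0}^∞ (1 - a q^j)`. -/
noncomputable def qPochInf (a q : ℂ) : ℂ :=
  ∏' j : ℕ, (1 - a * q ^ j)

/-- The q-Sylvester polynomial
`φ_n(z;q) = ∑_{k=0}^n ((w;q)_k/((q;q)_k (q;q)_{n-k})) z^{n-k}`,
where `w` plays the role of `q^z`. -/
noncomputable def qSylvester (q w z : ℂ) (n : ℕ) : ℂ :=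
  ∑ k ∈ Finset.range (n + 1),
    (qPoch w q k / (qPoch q q k * qPoch q q (n - k))) * z ^ (n - k)

lemma norm_mul_pow_lt_one {a q : ℂ} (ha : ‖a‖ < 1) (hq : ‖q‖ ≤ 1) (j : ℕ) :
    ‖a * q ^ j‖ < 1 := by
  rw [norm_mul, norm_pow]
  exact (mul_le_of_le_one_right (norm_nonneg a) (pow_le_one₀ (norm_nonneg q) hq)).trans_lt ha

lemma one_sub_mul_pow_ne_zero {a q : ℂ} (ha : ‖a‖ < 1) (hq : ‖q‖ ≤ 1) (j : ℕ) :
    1 - a * q ^ j ≠ 0 :=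
  sub_ne_zero.2 fun h => by simpa [← h] using norm_mul_pow_lt_one ha hq j

lemma qPoch_zero_left (q : ℂ) (n : ℕ) : qPoch 0 q n = 1 := by simp [qPoch]

lemma qPoch_succ (a q : ℂ) (n : ℕ) : qPoch a q (n + 1) = qPoch a q n * (1 - a * q ^ n) :=
  prod_range_succ _ _

lemma summable_norm_mul_pow (a : ℂ) {q : ℂ} (hq : ‖q‖ < 1) :
    Summable fun j : ℕ => ‖a * q ^ j‖ := by
  simpa [norm_mul, norm_pow] using
    (summable_geometric_of_lt_one (norm_nonneg q) hq).mul_left ‖a‖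

lemma multipliable_one_sub_mul_pow (a : ℂ) {q : ℂ} (hq : ‖q‖ < 1) :
    Multipliable fun j : ℕ => 1 - a * q ^ j := by
  simpa [sub_eq_add_neg] using
    multipliable_one_add_of_summable (f := fun j => -(a * q ^ j)) (by
      simpa using summable_norm_mul_pow a hq)

lemma tendsto_qPoch_atTop (a : ℂ) {q : ℂ} (hq : ‖q‖ < 1) :
    Tendsto (qPoch a q) atTop (𝓝 (qPochInf a q)) :=
  (multipliable_one_sub_mul_pow a hq).tendsto_prod_tprod_nat

lemma qPochInf_zero_left (q : ℂ) : qPochInf 0 q = 1 := by simp [qPochInf]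

lemma qPochInf_ne_zero {a q : ℂ} (ha : ‖a‖ < 1) (hq : ‖q‖ < 1) : qPochInf a q ≠ 0 := by
  simpa [qPochInf, sub_eq_add_neg] using
    tprod_one_add_ne_zero_of_summable (f := fun j => -(a * q ^ j))
      (by simpa [← sub_eq_add_neg] using one_sub_mul_pow_ne_zero ha hq.le)
      (by simpa using summable_norm_mul_pow a hq)

noncomputable def qBinomialSeriesCoeff (a q : ℂ) (k : ℕ) : ℂ := qPoch a q k / qPoch q q k

noncomputable def qBinomialSeries (a q x : ℂ) : ℂ := ∑' k, qBinomialSeriesCoeff a q k * x ^ k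

lemma qBinomialSeriesCoeff_zero (a q : ℂ) : qBinomialSeriesCoeff a q 0 = 1 := by
  simp [qBinomialSeriesCoeff, qPoch]

lemma qBinomialSeriesCoeff_succ (a q : ℂ) (k : ℕ) :
    qBinomialSeriesCoeff a q (k + 1) =
      qBinomialSeriesCoeff a q k * ((1 - a * q ^ k) / (1 - q * q ^ k)) := by
  simp only [qBinomialSeriesCoeff, qPoch_succ, mul_div_mul_comm]

lemma summable_norm_qBinomialSeriesCoeff_mul_pow (a : ℂ) {q x : ℂ} (hq : ‖q‖ < 1)
    (hx : ‖x‖ < 1) : Summable fun k => ‖qBinomialSeriesCoeff a q k * x ^ k‖ := by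
  obtain ⟨r, hxr, hr⟩ := exists_between hx
  have hratio : Tendsto (fun k : ℕ => (1 - a * q ^ k) / (1 - q * q ^ k) * x) atTop (𝓝 x) := by
    have hpow := tendsto_pow_atTop_nhds_zero_of_norm_lt_one hq
    have hnum : Tendsto (fun k : ℕ => 1 - a * q ^ k) atTop (𝓝 (1 - a * 0)) :=
      tendsto_const_nhds.sub (hpow.const_mul a)
    have hden : Tendsto (fun k : ℕ => 1 - q * q ^ k) atTop (𝓝 (1 - q * 0)) :=
      tendsto_const_nhds.sub (hpow.const_mul q)
    simpa using (hnum.div hden (by simp)).mul_const x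
  refine summable_of_ratio_norm_eventually_le hr ?_
  filter_upwards [hratio.norm.eventually (gt_mem_nhds hxr)] with k hk
  have hterm : qBinomialSeriesCoeff a q (k + 1) * x ^ (k + 1) =
      (1 - a * q ^ k) / (1 - q * q ^ k) * x * (qBinomialSeriesCoeff a q k * x ^ k) := by
    rw [qBinomialSeriesCoeff_succ, pow_succ]; ring
  rw [norm_norm, norm_norm, hterm, norm_mul]
  exact mul_le_mul_of_nonneg_right hk.le (norm_nonneg _)

lemma hasSum_qBinomialSeries (a : ℂ) {q x : ℂ} (hq : ‖q‖ < 1) (hx : ‖x‖ < 1) :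
    HasSum (fun k => qBinomialSeriesCoeff a q k * x ^ k) (qBinomialSeries a q x) :=
  (summable_norm_qBinomialSeriesCoeff_mul_pow a hq hx).of_norm.hasSum

lemma qBinomialSeries_functional_eq (a : ℂ) {q x : ℂ} (hq : ‖q‖ < 1) (hx : ‖x‖ < 1) :
    (1 - x) * qBinomialSeries a q x = (1 - a * x) * qBinomialSeries a q (q * x) := by
  have hqx : ‖q * x‖ < 1 := by simpa [mul_comm] using norm_mul_pow_lt_one hx hq.le 1
  have h₁ := hasSum_qBinomialSeries a hq hx
  have h₂ := hasSum_qBinomialSeries a hq hqx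
  -- `F(x) - F(qx)` has vanishing constant term, and shifting its index gives `x F(x) - ax F(qx)`
  have hdiff := (hasSum_nat_add_iff' 1).2 (h₁.sub h₂)
  have hshift := (h₁.mul_left x).sub (h₂.mul_left (a * x))
  have hq' (k : ℕ) : 1 - q * q ^ k ≠ 0 := by simpa using one_sub_mul_pow_ne_zero hq hq.le k
  have hterm : (fun k => qBinomialSeriesCoeff a q (k + 1) * x ^ (k + 1) -
      qBinomialSeriesCoeff a q (k + 1) * (q * x) ^ (k + 1)) =
      fun k => x * (qBinomialSeriesCoeff a q k * x ^ k) -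
        a * x * (qBinomialSeriesCoeff a q k * (q * x) ^ k) := by
    ext k
    rw [qBinomialSeriesCoeff_succ, div_eq_mul_inv]
    linear_combination (qBinomialSeriesCoeff a q k * (1 - a * q ^ k) * x ^ (k + 1)) *
      mul_inv_cancel₀ (hq' k)
  rw [hterm] at hdiff
  have key := hdiff.unique hshift
  simp only [sum_range_one, pow_zero, mul_one, sub_self, sub_zero] at key
  linear_combination key

lemma qPoch_mul_qBinomialSeries (a : ℂ) {q x : ℂ} (hq : ‖q‖ < 1) (hx : ‖x‖ < 1) (n : ℕ) :
    qPoch x q n * qBinomialSeries a q x =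
      qPoch (a * x) q n * qBinomialSeries a q (q ^ n * x) := by
  induction n with
  | zero => simp [qPoch]
  | succ n ih =>
    have hqnx : ‖q ^ n * x‖ < 1 := by simpa [mul_comm] using norm_mul_pow_lt_one hx hq.le n
    have hstep := qBinomialSeries_functional_eq a hq hqnx
    rw [show q * (q ^ n * x) = q ^ (n + 1) * x by ring] at hstep
    rw [qPoch_succ, qPoch_succ]
    linear_combination (1 - x * q ^ n) * ih + qPoch (a * x) q n * hstep

lemma tendsto_qBinomialSeries_pow_mul (a : ℂ) {q x : ℂ} (hq : ‖q‖ < 1) (hx : ‖x‖ < 1) :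
    Tendsto (fun n : ℕ => qBinomialSeries a q (q ^ n * x)) atTop (𝓝 1) := by
  have hzero : ∑' k, qBinomialSeriesCoeff a q k * (0 : ℂ) ^ k = 1 := by
    rw [tsum_eq_single 0 fun k hk => by simp [hk]]
    simp [qBinomialSeriesCoeff_zero]
  rw [← hzero]
  refine tendsto_tsum_of_dominated_convergence
    (summable_norm_qBinomialSeriesCoeff_mul_pow a hq hx) (fun k => ?_) (.of_forall fun n k => ?_)
  · simpa using (((tendsto_pow_atTop_nhds_zero_of_norm_lt_one hq).mul_const x).pow k).const_mul
      (qBinomialSeriesCoeff a q k)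
  · rw [norm_mul, norm_mul, norm_pow, norm_pow]
    gcongr
    rw [norm_mul, norm_pow]
    exact mul_le_of_le_one_left (norm_nonneg x) (pow_le_one₀ (norm_nonneg q) hq.le)

theorem qBinomialSeries_eq_div (a : ℂ) {q x : ℂ} (hq : ‖q‖ < 1) (hx : ‖x‖ < 1) :
    qBinomialSeries a q x = qPochInf (a * x) q / qPochInf x q := by
  rw [eq_div_iff (qPochInf_ne_zero hx hq), mul_comm]
  refine tendsto_nhds_unique ((tendsto_qPoch_atTop x hq).mul_const _) ?_
  simpa [qPoch_mul_qBinomialSeries a hq hx] using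
    (tendsto_qPoch_atTop (a * x) hq).mul (tendsto_qBinomialSeries_pow_mul a hq hx)

lemma qSylvester_mul_pow (q w z t : ℂ) (n : ℕ) :
    qSylvester q w z n * t ^ n = ∑ k ∈ range (n + 1), qBinomialSeriesCoeff w q k * t ^ k *
      (qBinomialSeriesCoeff 0 q (n - k) * (z * t) ^ (n - k)) := by
  rw [qSylvester, sum_mul]
  refine sum_congr rfl fun k hk => ?_
  rw [← Nat.add_sub_of_le (mem_range_succ_iff.1 hk), Nat.add_sub_cancel_left]
  simp only [qBinomialSeriesCoeff, qPoch_zero_left, pow_add, mul_pow]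
  ring

theorem qSylvester_genfun_general (q w z t : ℂ)
    (hq1 : ‖q‖ < 1)
    (ht : ‖t‖ < 1) (hzt : ‖z * t‖ < 1) :
    ∑' n : ℕ, qSylvester q w z n * t ^ n =
      qPochInf (w * t) q / (qPochInf t q * qPochInf (z * t) q) := by
  rw [tsum_congr (qSylvester_mul_pow q w z t),
    ← tsum_mul_tsum_eq_tsum_sum_range_of_summable_norm
      (summable_norm_qBinomialSeriesCoeff_mul_pow w hq1 ht)
      (summable_norm_qBinomialSeriesCoeff_mul_pow 0 hq1 hzt)]
  change qBinomialSeries w q t * qBinomialSeries 0 q (z * t) = _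
  rw [qBinomialSeries_eq_div w hq1 ht, qBinomialSeries_eq_div 0 hq1 hzt, zero_mul,
    qPochInf_zero_left, div_mul_div_comm, mul_one]

/-- Generating function of the q-Sylvester polynomials:
`∑_{n=0}^∞ φ_n(z;q) t^n = (wt;q)_∞/((t;q)_∞ (zt;q)_∞)`. -/
theorem qSylvester_genfun (q w z t : ℂ) (hq0 : 0 < ‖q‖)
    (hq1 : ‖q‖ < 1) (hz : z ≠ 0)
    (ht : ‖t‖ < 1) (hzt : ‖z * t‖ < 1) :
    ∑' n : ℕ, qSylvester q w z n * t ^ n =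
      qPochInf (w * t) q / (qPochInf t q * qPochInf (z * t) q) :=
  qSylvester_genfun_general q w z t hq1 ht hzt
end

section
/- For natural numbers m, j, complex λ, and complex t with |t| < 1/2, ∑_{n=0}^∞ B_m^j(−2n−1−j) ((λ)_n/n!) t^n = (1−t)^{−λ} · ₃F₂(−m, m+1, λ; 1, j+1; −t/(1−t)), where B_m^j(−2n−1−j) = ∑_{k=0}^m ((−m)_k (m+1)_k (−n)_k / (k! k! (j+1)_k)) and (a)_k is the rising factorial. -/
/-- The rising factorial (Pochhammer symbol) `(a)_k = a(a+1)⋯(a+k-1)`. -/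
noncomputable def risingFactorial (a : ℂ) (k : ℕ) : ℂ :=
  ∏ i ∈ Finset.range k, (a + i)

/-- The Pasternack polynomial `B_m^j` evaluated at `z = −2n−1−j`. -/
noncomputable def pasternackEval (m j n : ℕ) : ℂ :=
  ∑ k ∈ Finset.range (m + 1),
    risingFactorial (-(m : ℂ)) k * risingFactorial ((m : ℂ) + 1) k *
      risingFactorial (-(n : ℂ)) k /
      ((k.factorial : ℂ) * (k.factorial : ℂ) * risingFactorial ((j : ℂ) + 1) k)

/-!
Expanding `B_m^j(−2n−1−j)` as a sum over `k ≤ m` and exchanging this finite sum with the series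
leaves one series per `k`. As `(−n)_k = (−1)^k n!/(n−k)!` vanishes for `n < k`, the shift
`n ↦ k + r` turns `∑_n (−n)_k (λ)_n/n! tⁿ` into `(−t)^k (λ)_k ∑_r (λ+k)_r/r! t^r`, which the
binomial series sums to `(λ)_k (−t)^k (1−t)^{−λ−k} = (1−t)^{−λ} (λ)_k (−t/(1−t))^k`.
-/

open Finset Polynomial

theorem risingFactorial_eq_ascPochhammer_eval (a : ℂ) (k : ℕ) :
    risingFactorial a k = (ascPochhammer ℂ k).eval a := by
  induction k with
  | zero => simp [risingFactorial]
  | succ k ih =>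
    rw [risingFactorial, prod_range_succ, ← risingFactorial, ih, ascPochhammer_succ_eval]

theorem risingFactorial_add (a : ℂ) (k r : ℕ) :
    risingFactorial a (k + r) = risingFactorial a k * risingFactorial (a + k) r := by
  simp [risingFactorial, prod_range_add, add_assoc]

theorem risingFactorial_neg_natCast (n k : ℕ) :
    risingFactorial (-(n : ℂ)) k = (-1) ^ k * n.descFactorial k := by
  rw [risingFactorial_eq_ascPochhammer_eval, ascPochhammer_eval_neg_eq_descPochhammer,
    descPochhammer_eval_eq_descFactorial]

theorem risingFactorial_neg_natCast_mul_div_factorial (a : ℂ) (k r : ℕ) :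
    risingFactorial (-((k + r : ℕ) : ℂ)) k * (risingFactorial a (k + r) / (k + r).factorial) =
      (-1) ^ k * risingFactorial a k * (risingFactorial (a + k) r / r.factorial) := by
  have hfac := Nat.factorial_mul_descFactorial (Nat.le_add_right k r)
  rw [Nat.add_sub_cancel_left] at hfac
  rw [risingFactorial_neg_natCast, risingFactorial_add, ← hfac]
  push_cast
  field_simp

theorem ringChoose_add_natCast_sub_one (a : ℂ) (n : ℕ) :
    Ring.choose (a + n - 1) n = risingFactorial a n / n.factorial := by
  rw [Ring.choose_eq_smul, descPochhammer_smeval_eq_ascPochhammer, ascPochhammer_smeval_eq_eval,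
    risingFactorial_eq_ascPochhammer_eval, smul_eq_mul, div_eq_inv_mul]
  ring_nf

theorem hasSum_risingFactorial_div_factorial_mul_pow {t : ℂ} (ht : ‖t‖ < 1) (a : ℂ) :
    HasSum (fun n ↦ risingFactorial a n / n.factorial * t ^ n) ((1 - t) ^ (-a)) := by
  have h := (Complex.one_div_one_sub_cpow_hasFPowerSeriesOnBall_zero a).hasSum
    (y := t) (by simpa [← ofReal_norm] using ht)
  simpa [FormalMultilinearSeries.ofScalars_apply_eq, ringChoose_add_natCast_sub_one,
    Complex.cpow_neg, mul_comm] using h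

theorem hasSum_risingFactorial_neg_natCast_mul {t : ℂ} (ht : ‖t‖ < 1) (a : ℂ) (k : ℕ) :
    HasSum (fun n : ℕ ↦ risingFactorial (-(n : ℂ)) k * (risingFactorial a n / n.factorial) * t ^ n)
      ((1 - t) ^ (-a) * (risingFactorial a k * (-t / (1 - t)) ^ k)) := by
  have h1t : 1 - t ≠ 0 := sub_ne_zero.2 fun h ↦ by simp [← h] at ht
  have hvanish : ∀ n ∈ range k,
      risingFactorial (-(n : ℂ)) k * (risingFactorial a n / n.factorial) * t ^ n = 0 :=
    fun n hn ↦ by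
      rw [risingFactorial_neg_natCast, Nat.descFactorial_eq_zero_iff_lt.2 (mem_range.1 hn)]
      simp
  have hshift : ∀ r : ℕ,
      risingFactorial (-((r + k : ℕ) : ℂ)) k * (risingFactorial a (r + k) / (r + k).factorial) *
        t ^ (r + k) =
      (-t) ^ k * risingFactorial a k * (risingFactorial (a + k) r / r.factorial * t ^ r) :=
    fun r ↦ by
      rw [add_comm r k, risingFactorial_neg_natCast_mul_div_factorial, pow_add, neg_pow]
      ring
  have hvalue : (1 - t) ^ (-a) * (risingFactorial a k * (-t / (1 - t)) ^ k) =
      (-t) ^ k * risingFactorial a k * (1 - t) ^ (-(a + k)) := by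
    rw [neg_add, Complex.cpow_add _ _ h1t, Complex.cpow_neg _ (k : ℂ), Complex.cpow_natCast,
      div_pow]
    ring
  rw [← hasSum_nat_add_iff' k, sum_eq_zero hvanish, sub_zero, hvalue]
  simpa only [hshift] using (hasSum_risingFactorial_div_factorial_mul_pow ht (a + k)).mul_left
    ((-t) ^ k * risingFactorial a k)

/-- `∑_{n=0}^∞ B_m^j(−2n−1−j) ((λ)_n/n!) t^n
  = (1−t)^{−λ} ₃F₂(−m, m+1, λ; 1, j+1; −t/(1−t))` (terminating sum,
principal branch for `(1−t)^{−λ}`). -/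
theorem pasternack_eval_genfun_lambda (m j : ℕ) (lam t : ℂ)
    (ht : ‖t‖ < 1 / 2) :
    ∑' n : ℕ, pasternackEval m j n * (risingFactorial lam n / (n.factorial : ℂ)) * t ^ n =
      (1 - t) ^ (-lam) *
        ∑ k ∈ Finset.range (m + 1),
          (risingFactorial (-(m : ℂ)) k * risingFactorial ((m : ℂ) + 1) k *
            risingFactorial lam k /
            ((k.factorial : ℂ) * (k.factorial : ℂ) * risingFactorial ((j : ℂ) + 1) k)) *
            (-t / (1 - t)) ^ k := by
  set c : ℕ → ℂ := fun k ↦ risingFactorial (-(m : ℂ)) k * risingFactorial ((m : ℂ) + 1) k /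
    ((k.factorial : ℂ) * (k.factorial : ℂ) * risingFactorial ((j : ℂ) + 1) k)
  have hterm : ∀ n : ℕ, pasternackEval m j n * (risingFactorial lam n / n.factorial) * t ^ n =
      ∑ k ∈ range (m + 1),
        c k * (risingFactorial (-(n : ℂ)) k * (risingFactorial lam n / n.factorial) * t ^ n) :=
    fun n ↦ by
      simp only [pasternackEval, sum_mul, c]
      exact sum_congr rfl fun k _ ↦ by ring
  have hsum := hasSum_sum fun k (_ : k ∈ range (m + 1)) ↦
    (hasSum_risingFactorial_neg_natCast_mul (by linarith) lam k).mul_left (c k)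
  rw [tsum_congr hterm, hsum.tsum_eq, mul_sum]
  exact sum_congr rfl fun k _ ↦ by ring
end
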